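/- arXiv:1204.1674 — 2 statements merged into one kernel-verified Lean document; each statement's English description precedes it below -/
import Mathlib

section
/- Let μ ∈ ℝ and 0 < ρ < 1, set γ = √(1−ρ²), let ν(x) = e^{−x²/2}/√(2π), and let He_k denote the probabilists' Hermite polynomial, He_k(x) = (−1)^k e^{x²/2} (d/dx)^k e^{−x²/2}, with the convention He_{−1} := 0. Define the transfer operator G by G(h)(x) := (μ+x) ∫_ℝ h(ρx + γy) ν(y) dy. Then for every integer k ≥ 0 and every x ∈ ℝ, G(He_k)(x) = ρ^k · ( μ·He_k(x) + k·He_{k−1}(x) + He_{k+1}(x) ). Equivalently, in the orthonormal basis h_k := He_k/√(k!) of L²(ν), the operator G satisfies G(h_k) = ρ^k ( μ h_k + √k · h_{k−1} + √(k+1) · h_{k+1} ), i.e. G = (μI + A + A†)R, where R(h_k) = ρ^k h_k, A(h_k) = √k h_{k−1} and A†(h_k) = √(k+1) h_{k+1} are the ladder operators of the quantum harmonic oscillator. -/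
/-!
Writing `ρ x + γ y` with `y ∼ N(0, 1)` as a sample `z ∼ N(ρ x, γ²)`, the claim reduces to the
Mehler-type identity `E[He_k(z)] = ρ^k He_k(x)` for `γ² = 1 - ρ²`, after which the three-term
recurrence `x He_k = He_{k+1} + k He_{k-1}` finishes. For the identity, Gaussian integration by
parts `E[(z - m) P(z)] = v E[P'(z)]` together with `He_{k+1}' = (k + 1) He_k` shows that both sides
satisfy `F_{k+2} = ρ x F_{k+1} - ρ² (k + 1) F_k`.
-/

open MeasureTheory ProbabilityTheory

/-- The probabilists' Hermite polynomial `He_k`, evaluated at a real point. -/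
noncomputable def hermiteR (k : ℕ) (x : ℝ) : ℝ :=
  Polynomial.aeval x (Polynomial.hermite k)

open Polynomial
open scoped NNReal

namespace Polynomial

theorem derivative_hermite_succ (n : ℕ) :
    derivative (hermite (n + 1)) = (n + 1 : ℤ[X]) * hermite n := by
  ext k
  rw [coeff_derivative, show (n + 1 : ℤ[X]) = C ((n : ℤ) + 1) by simp, coeff_C_mul,
    coeff_hermite, coeff_hermite]
  have hparity : Even (n + 1 + (k + 1)) ↔ Even (n + k) := by
    rw [show n + 1 + (k + 1) = n + k + 2 by omega, Nat.even_add, iff_true_right even_two]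
  by_cases h : Even (n + k)
  · rw [if_pos (hparity.2 h), if_pos h, show n + 1 - (k + 1) = n - k by omega]
    have hchoose : ((n + 1).choose (k + 1) : ℤ) * (k + 1) = (n + 1) * n.choose k := by
      exact_mod_cast (Nat.add_one_mul_choose_eq n k).symm
    linear_combination (-1 : ℤ) ^ ((n - k) / 2) * ((n - k - 1).doubleFactorial : ℤ) * hchoose
  · rw [if_neg (mt hparity.1 h), if_neg h, zero_mul, mul_zero]

theorem hermite_succ_succ (n : ℕ) :
    hermite (n + 2) = X * hermite (n + 1) - (n + 1 : ℤ[X]) * hermite n := by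
  rw [hermite_succ (n + 1), derivative_hermite_succ]

end Polynomial

/-- For `n = 0` the truncated `n - 1 = 0` is harmless: its coefficient `n` vanishes. -/
lemma hermiteR_succ (n : ℕ) (x : ℝ) :
    hermiteR (n + 1) x = x * hermiteR n x - n * hermiteR (n - 1) x := by
  cases n with
  | zero => simp [hermiteR]
  | succ n => rw [hermiteR, hermite_succ_succ]; simp [hermiteR]

namespace ProbabilityTheory

lemma hasDerivAt_gaussianPDFReal (m : ℝ) (v : ℝ≥0) (x : ℝ) :
    HasDerivAt (gaussianPDFReal m v) (-(x - m) / v * gaussianPDFReal m v x) x := by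
  rcases eq_or_ne v 0 with rfl | hv
  · simp only [gaussianPDFReal_zero_var, Pi.zero_apply, mul_zero]
    exact hasDerivAt_const x 0
  have hexponent : HasDerivAt (fun y ↦ -(y - m) ^ 2 / (2 * v)) (-(x - m) / v) x := by
    refine ((((hasDerivAt_id' x).sub_const m).fun_pow 2).neg.div_const _).congr_deriv ?_
    field_simp
    ring
  rw [gaussianPDFReal_def]
  exact (hexponent.exp.const_mul _).congr_deriv (by ring)

variable {m : ℝ} {v : ℝ≥0}

lemma _root_.MeasureTheory.Integrable.gaussianPDFReal_smul {E : Type*} [NormedAddCommGroup E]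
    [NormedSpace ℝ E] {f : ℝ → E} (hv : v ≠ 0) (hf : Integrable f (gaussianReal m v)) :
    Integrable (fun x ↦ gaussianPDFReal m v x • f x) := by
  rw [gaussianReal_of_var_ne_zero _ hv, integrable_withDensity_iff_integrable_smul'
    (measurable_gaussianPDF m v) (ae_of_all _ fun _ ↦ gaussianPDF_lt_top)] at hf
  simpa [toReal_gaussianPDF] using hf

lemma integrable_pow_gaussianReal (n : ℕ) : Integrable (fun x ↦ x ^ n) (gaussianReal m v) :=
  (memLp_id_gaussianReal n).integrable_norm_pow'.mono' (by fun_prop)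
    (ae_of_all _ fun x ↦ by simp [norm_pow])

section

variable {R : Type*} [CommSemiring R] [Algebra R ℝ]

lemma integrable_aeval_gaussianReal (P : R[X]) :
    Integrable (fun x ↦ aeval x P) (gaussianReal m v) := by
  induction P using Polynomial.induction_on' with
  | add p q hp hq => simp only [map_add]; exact hp.add hq
  | monomial n r => simpa using (integrable_pow_gaussianReal n).const_mul (algebraMap R ℝ r)

lemma integrable_sub_mul_aeval_gaussianReal (P : R[X]) (c : ℝ) :
    Integrable (fun x ↦ (x - c) * aeval x P) (gaussianReal m v) := by
  have h := (integrable_aeval_gaussianReal (m := m) (v := v) (X * P)).sub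
    ((integrable_aeval_gaussianReal P).const_mul c)
  simp only [map_mul, aeval_X] at h
  exact h.congr (ae_of_all _ fun x ↦ by simp [sub_mul])

theorem integral_sub_mul_aeval_gaussianReal (P : R[X]) :
    ∫ x, (x - m) * aeval x P ∂gaussianReal m v
      = v * ∫ x, aeval x (derivative P) ∂gaussianReal m v := by
  rcases eq_or_ne v 0 with rfl | hv
  · simp [gaussianReal_zero_var]
  have hvR : (v : ℝ) ≠ 0 := by exact_mod_cast hv
  have hdensity : ∀ x, aeval x P * (-(x - m) / v * gaussianPDFReal m v x)
      = -(v : ℝ)⁻¹ * (gaussianPDFReal m v x • ((x - m) * aeval x P)) := fun x ↦ by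
    rw [smul_eq_mul]; field_simp
  have ibp := integral_mul_deriv_eq_deriv_mul_of_integrable
    (fun x _ ↦ P.hasDerivAt_aeval x) (fun x _ ↦ hasDerivAt_gaussianPDFReal m v x)
    (by simpa only [Pi.mul_def, hdensity] using
      ((integrable_sub_mul_aeval_gaussianReal P m).gaussianPDFReal_smul hv).const_mul _)
    (by simpa only [Pi.mul_def, mul_comm, smul_eq_mul] using
      (integrable_aeval_gaussianReal (derivative P)).gaussianPDFReal_smul hv)
    (by simpa only [Pi.mul_def, mul_comm, smul_eq_mul] using
      (integrable_aeval_gaussianReal P).gaussianPDFReal_smul hv)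
  simp only [hdensity, integral_const_mul] at ibp
  simp only [integral_gaussianReal_eq_integral_smul hv, smul_eq_mul,
    mul_comm (gaussianPDFReal m v _)] at ibp ⊢
  field_simp at ibp
  linarith

end

lemma integral_comp_const_add_mul_gaussianReal {E : Type*} [NormedAddCommGroup E]
    [NormedSpace ℝ E] {f : ℝ → E} (hf : StronglyMeasurable f) (a b : ℝ) :
    ∫ y, f (a + b * y) ∂gaussianReal m v
      = ∫ z, f z ∂gaussianReal (b * m + a) (.mk (b ^ 2) (sq_nonneg b) * v) := by
  rw [← gaussianReal_map_const_add, ← gaussianReal_map_const_mul,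
    Measure.map_map (by fun_prop) (by fun_prop),
    integral_map (by fun_prop) hf.aestronglyMeasurable]
  rfl

end ProbabilityTheory

section HermiteGaussian

variable {m : ℝ} {v : ℝ≥0}

lemma integrable_hermiteR_gaussianReal (k : ℕ) : Integrable (hermiteR k) (gaussianReal m v) :=
  integrable_aeval_gaussianReal (hermite k)

lemma integral_sub_mul_hermiteR_gaussianReal (n : ℕ) :
    ∫ x, (x - m) * hermiteR (n + 1) x ∂gaussianReal m v
      = v * (n + 1) * ∫ x, hermiteR n x ∂gaussianReal m v := by
  simp only [hermiteR]
  rw [integral_sub_mul_aeval_gaussianReal, derivative_hermite_succ]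
  simp [integral_const_mul, mul_assoc]

theorem integral_hermiteR_gaussianReal {ρ : ℝ} (hv : (v : ℝ) = 1 - ρ ^ 2) (x : ℝ) (k : ℕ) :
    ∫ z, hermiteR k z ∂gaussianReal (ρ * x) v = ρ ^ k * hermiteR k x := by
  induction k using Nat.twoStepInduction with
  | zero => simp [hermiteR]
  | one => simp [hermiteR, integral_id_gaussianReal]
  | more n ih₀ ih₁ =>
    have hrec : ∀ z, hermiteR (n + 2) z
        = (z - ρ * x) * hermiteR (n + 1) z + ρ * x * hermiteR (n + 1) z - (n + 1) * hermiteR n z :=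
      fun z ↦ by rw [hermiteR_succ (n + 1)]; push_cast; ring
    have hint := integrable_hermiteR_gaussianReal (m := ρ * x) (v := v)
    have hint_sub : Integrable (fun z ↦ (z - ρ * x) * hermiteR (n + 1) z)
        (gaussianReal (ρ * x) v) :=
      integrable_sub_mul_aeval_gaussianReal _ _
    have hint_add : Integrable (fun z ↦ (z - ρ * x) * hermiteR (n + 1) z
        + ρ * x * hermiteR (n + 1) z) (gaussianReal (ρ * x) v) :=
      hint_sub.add ((hint _).const_mul _)
    calc ∫ z, hermiteR (n + 2) z ∂gaussianReal (ρ * x) v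
        = ∫ z, (z - ρ * x) * hermiteR (n + 1) z ∂gaussianReal (ρ * x) v
          + ρ * x * ∫ z, hermiteR (n + 1) z ∂gaussianReal (ρ * x) v
          - (n + 1) * ∫ z, hermiteR n z ∂gaussianReal (ρ * x) v := by
          simp_rw [hrec]
          rw [integral_sub hint_add ((hint _).const_mul _),
            integral_add hint_sub ((hint _).const_mul _), integral_const_mul, integral_const_mul]
      _ = ρ ^ (n + 2) * hermiteR (n + 2) x := by
          rw [integral_sub_mul_hermiteR_gaussianReal, ih₀, ih₁, hv, hermiteR_succ (n + 1) x]
          push_cast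
          ring

end HermiteGaussian

/-- Action of the transfer operator
`G(h)(x) = (μ+x) ∫ h(ρx + γy) dN(0,1)(y)` on the Hermite polynomials:
`G(He_k) = ρ^k (μ He_k + k He_{k-1} + He_{k+1})` (with `He_{-1} := 0`; for `k = 0`
the middle term vanishes since its coefficient `k` is zero). -/
theorem transfer_operator_on_hermite
    (μ ρ : ℝ) (hρ0 : 0 < ρ) (hρ1 : ρ < 1)
    (γ : ℝ) (hγ : γ = Real.sqrt (1 - ρ ^ 2)) (k : ℕ) (x : ℝ) :
    (μ + x) * ∫ y, hermiteR k (ρ * x + γ * y) ∂(gaussianReal 0 1)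
      = ρ ^ k * (μ * hermiteR k x + (k : ℝ) * hermiteR (k - 1) x
          + hermiteR (k + 1) x) := by
  have hvar : ((.mk (γ ^ 2) (sq_nonneg γ) * 1 : ℝ≥0) : ℝ) = 1 - ρ ^ 2 := by
    rw [mul_one, NNReal.coe_mk, hγ, Real.sq_sqrt (by nlinarith)]
  rw [integral_comp_const_add_mul_gaussianReal (f := hermiteR k)
      (Polynomial.continuous_aeval _).stronglyMeasurable,
    mul_zero, zero_add, integral_hermiteR_gaussianReal hvar]
  linear_combination -ρ ^ k * hermiteR_succ k x
end

section
/- Let μ ∈ ℝ and 0 < ρ < 1, set γ = √(1−ρ²), let ν(x) = e^{−x²/2}/√(2π), and define Q_N : ℝ → ℝ recursively by Q_0 ≡ 1 and Q_{N+1}(x) = (μ+x) ∫_ℝ Q_N(ρx + γy) ν(y) dy. Then for every N ≥ 0 the function Q_N coincides with a polynomial of degree exactly N whose leading coefficient is ρ^{N(N−1)/2}; in particular, lim_{x→+∞} Q_N(x)/x^N = ρ^{N(N−1)/2}. -/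
/-!
Expanding `p (m + b y)` in Taylor series around `m` and integrating term by term shows that
`m ↦ ∫ p (m + b y) dν(y)` is a polynomial whenever `ν` has moments of all orders; when `ν` is a
probability measure only the `k = 0` term `p` itself contributes to the top degree, so this
polynomial has the same degree and leading coefficient as `p`. Hence `Q_{N+1}(x)` is `(μ + x)`
times a polynomial in `ρ x` with the leading term of `Q_N`, and the leading coefficient gets
multiplied by `ρ^N` at step `N`.
-/

open MeasureTheory ProbabilityTheory Filter

namespace Polynomial

open Finset

variable (ν : Measure ℝ) (b : ℝ) (p : ℝ[X])

noncomputable def averageShift : ℝ[X] :=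
  ∑ k ∈ range (p.natDegree + 1), (b ^ k * ∫ y, y ^ k ∂ν) • hasseDeriv k p

variable {ν}

theorem eval_averageShift (hν : ∀ k : ℕ, Integrable (fun y : ℝ => y ^ k) ν) (m : ℝ) :
    (averageShift ν b p).eval m = ∫ y, p.eval (m + b * y) ∂ν := by
  have taylor_expansion : ∀ y, p.eval (m + b * y)
      = ∑ k ∈ range (p.natDegree + 1), (hasseDeriv k p).eval m * b ^ k * y ^ k := by
    intro y
    rw [add_comm, ← taylor_eval,
      eval_eq_sum_range' (by rw [natDegree_taylor]; exact Nat.lt_succ_self _)]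
    simp only [taylor_coeff, mul_pow, mul_assoc]
  simp only [taylor_expansion]
  rw [integral_finsetSum _ fun k _ => (hν k).const_mul _, averageShift, eval_finsetSum]
  refine sum_congr rfl fun k _ => ?_
  rw [integral_const_mul, eval_smul, smul_eq_mul]
  ring

theorem degree_averageShift_sub_lt [IsProbabilityMeasure ν] (hp : p ≠ 0) :
    (averageShift ν b p - p).degree < p.degree := by
  have hp_deg : p.degree = p.natDegree := degree_eq_natDegree hp
  rw [averageShift, sum_range_succ']
  simp only [pow_zero, integral_const, probReal_univ, smul_eq_mul, mul_one, one_smul,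
    hasseDeriv_zero', add_sub_cancel_right]
  refine (degree_sum_le _ _).trans_lt ((Finset.sup_lt_iff (by simp [hp_deg])).2 fun k hk => ?_)
  calc ((b ^ (k + 1) * ∫ y, y ^ (k + 1) ∂ν) • hasseDeriv (k + 1) p).degree
      ≤ (hasseDeriv (k + 1) p).degree := degree_smul_le _ _
    _ ≤ (hasseDeriv (k + 1) p).natDegree := degree_le_natDegree
    _ ≤ (p.natDegree - (k + 1) : ℕ) := by exact_mod_cast natDegree_hasseDeriv_le p (k + 1)
    _ < p.degree := by
      rw [hp_deg]
      exact_mod_cast Nat.sub_lt_self k.succ_pos (mem_range.1 hk)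

theorem degree_averageShift [IsProbabilityMeasure ν] :
    (averageShift ν b p).degree = p.degree := by
  rcases eq_or_ne p 0 with rfl | hp
  · simp [averageShift]
  · rw [← sub_add_cancel (averageShift ν b p) p,
      degree_add_eq_right_of_degree_lt (degree_averageShift_sub_lt b p hp)]

theorem leadingCoeff_averageShift [IsProbabilityMeasure ν] :
    (averageShift ν b p).leadingCoeff = p.leadingCoeff := by
  rcases eq_or_ne p 0 with rfl | hp
  · simp [averageShift]
  · rw [← sub_add_cancel (averageShift ν b p) p,
      leadingCoeff_add_of_degree_lt (degree_averageShift_sub_lt b p hp)]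

end Polynomial

theorem ProbabilityTheory.integrable_pow_gaussianReal_s12 (m : ℝ) (v : NNReal) (k : ℕ) :
    Integrable (fun y : ℝ => y ^ k) (gaussianReal m v) :=
  integrable_pow_of_mem_interior_integrableExpSet
    (by simp [integrableExpSet_fun_id_gaussianReal]) k

open Polynomial in
theorem exists_eval_eq_mul_integral_eval {ν : Measure ℝ} [IsProbabilityMeasure ν]
    (hν : ∀ k : ℕ, Integrable (fun y : ℝ => y ^ k) ν) (μ ρ γ : ℝ) (hρ : ρ ≠ 0)
    {p : ℝ[X]} (hp : p ≠ 0) :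
    ∃ q : ℝ[X], (∀ x, (μ + x) * ∫ y, p.eval (ρ * x + γ * y) ∂ν = q.eval x)
      ∧ q.natDegree = p.natDegree + 1 ∧ q.leadingCoeff = ρ ^ p.natDegree * p.leadingCoeff := by
  set t := (averageShift ν γ p).comp (C ρ * X)
  have ht_natDegree : t.natDegree = p.natDegree := by
    rw [natDegree_comp, natDegree_C_mul_X _ hρ, mul_one,
      natDegree_eq_natDegree (degree_averageShift γ p)]
  have ht_leadingCoeff : t.leadingCoeff = ρ ^ p.natDegree * p.leadingCoeff := by
    rw [leadingCoeff_comp (by rw [natDegree_C_mul_X _ hρ]; exact one_ne_zero),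
      leadingCoeff_averageShift, leadingCoeff_C_mul_X,
      natDegree_eq_natDegree (degree_averageShift γ p), mul_comm]
  have ht : t ≠ 0 := by
    rw [← leadingCoeff_ne_zero, ht_leadingCoeff]
    exact mul_ne_zero (pow_ne_zero _ hρ) (leadingCoeff_ne_zero.2 hp)
  refine ⟨(X + C μ) * t, fun x => ?_, ?_, ?_⟩
  · simp [t, eval_averageShift γ p hν, add_comm μ]
  · rw [natDegree_mul (X_add_C_ne_zero μ) ht, natDegree_X_add_C, ht_natDegree, add_comm]
  · rw [leadingCoeff_mul, leadingCoeff_X_add_C, one_mul, ht_leadingCoeff]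

theorem Q_is_polynomial_leading_coeff_general
    (μ ρ : ℝ) (hρ0 : 0 < ρ)
    (γ : ℝ)
    (Q : ℕ → ℝ → ℝ) (hQ0 : ∀ x, Q 0 x = 1)
    (hQ : ∀ N x, Q (N + 1) x
      = (μ + x) * ∫ y, Q N (ρ * x + γ * y) ∂(gaussianReal 0 1)) :
    ∀ N : ℕ,
      (∃ p : Polynomial ℝ, (∀ x, Q N x = p.eval x)
        ∧ p.degree = (N : ℕ) ∧ p.leadingCoeff = ρ ^ (N * (N - 1) / 2)) ∧
      Tendsto (fun x : ℝ => Q N x / x ^ N) atTop (nhds (ρ ^ (N * (N - 1) / 2))) := by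
  have exists_polynomial : ∀ N : ℕ, ∃ p : Polynomial ℝ, (∀ x, Q N x = p.eval x)
      ∧ p.natDegree = N ∧ p.leadingCoeff = ρ ^ (N * (N - 1) / 2) := by
    intro N
    induction N with
    | zero => exact ⟨1, by simp [hQ0]⟩
    | succ N ih =>
      obtain ⟨p, hQp, hp_natDegree, hp_leadingCoeff⟩ := ih
      have hp : p ≠ 0 := by
        rw [← Polynomial.leadingCoeff_ne_zero, hp_leadingCoeff]; positivity
      obtain ⟨q, hQq, hq_natDegree, hq_leadingCoeff⟩ := exists_eval_eq_mul_integral_eval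
        (integrable_pow_gaussianReal_s12 0 1) μ ρ γ hρ0.ne' hp
      refine ⟨q, fun x => by simp only [hQ, hQp, hQq], by rw [hq_natDegree, hp_natDegree], ?_⟩
      -- `N (N - 1) / 2 = choose N 2`, which sidesteps the truncated subtraction and division
      rw [hq_leadingCoeff, hp_leadingCoeff, hp_natDegree, ← pow_add, ← Nat.choose_two_right,
        ← Nat.choose_two_right, Nat.choose_succ_succ', Nat.choose_one_right]
  intro N
  obtain ⟨p, hQp, hp_natDegree, hp_leadingCoeff⟩ := exists_polynomial N
  have hp_degree : p.degree = N := by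
    rw [Polynomial.degree_eq_natDegree
      (by rw [← Polynomial.leadingCoeff_ne_zero, hp_leadingCoeff]; positivity), hp_natDegree]
  refine ⟨⟨p, hQp, hp_degree, hp_leadingCoeff⟩, ?_⟩
  have h := Polynomial.div_tendsto_atTop_leadingCoeff_div_of_degree_eq p (Polynomial.X ^ N)
    (hp_degree.trans (Polynomial.degree_X_pow N).symm)
  simpa [hQp, hp_leadingCoeff] using h

/-- Each conditional product moment `Q_N` is a polynomial of
degree exactly `N` with leading coefficient `ρ^{N(N-1)/2}`; in particular
`Q_N(x)/x^N → ρ^{N(N-1)/2}` as `x → +∞`. -/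
theorem Q_is_polynomial_leading_coeff
    (μ ρ : ℝ) (hρ0 : 0 < ρ) (hρ1 : ρ < 1)
    (γ : ℝ) (hγ : γ = Real.sqrt (1 - ρ ^ 2))
    (Q : ℕ → ℝ → ℝ) (hQ0 : ∀ x, Q 0 x = 1)
    (hQ : ∀ N x, Q (N + 1) x
      = (μ + x) * ∫ y, Q N (ρ * x + γ * y) ∂(gaussianReal 0 1)) :
    ∀ N : ℕ,
      (∃ p : Polynomial ℝ, (∀ x, Q N x = p.eval x)
        ∧ p.degree = (N : ℕ) ∧ p.leadingCoeff = ρ ^ (N * (N - 1) / 2)) ∧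
      Tendsto (fun x : ℝ => Q N x / x ^ N) atTop (nhds (ρ ^ (N * (N - 1) / 2))) :=
  Q_is_polynomial_leading_coeff_general μ ρ hρ0 γ Q hQ0 hQ
end
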